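/- arXiv:1908.06250 — 3 statements merged into one kernel-verified Lean document; each statement's English description precedes it below -/
import Mathlib

section
/- Let G be any signed digraph that is strongly connected. Then the matrix (W·L + Lᵀ·W)/2 is a valid Laplacian matrix of the mirror signed graph of G; that is, (W·L + Lᵀ·W)/2 = Δ̂ − Â, where Â = (W·A + Aᵀ·W)/2 is the mirror adjacency matrix and Δ̂ = diag(Σ_j |â_1j|, …, Σ_j |â_nj|). In particular, for every i the i-th diagonal entry of (W·L + Lᵀ·W)/2 equals Σ_j |â_ij|, and for i ≠ j the (i,j) entry equals −â_ij. -/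
/-!
Entrywise, the off-diagonal identity is immediate and the diagonal one amounts to
`Σⱼ |âᵢⱼ| = wᵢ Δᵢ`, where `w = (det L̄ᵢᵢ)ᵢ`. Each `L̄ᵢᵢ` is weakly diagonally dominant, so `w ≥ 0`;
together with `aᵢⱼ aⱼᵢ ≥ 0` this gives `|âᵢⱼ| = (wᵢ |aᵢⱼ| + wⱼ |aⱼᵢ|) / 2`, and the claim reduces to
`wᵀ L̄ = 0`. By strong connectivity and a maximum principle, `ker L̄` consists of the constant
vectors. Since `L̄ · adj L̄ = det L̄ · 1 = 0`, every column of `adj L̄` is constant, equal to its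
diagonal entry `wⱼ`; so every row of `adj L̄` is `wᵀ`, and `adj L̄ · L̄ = 0` reads `wᵀ L̄ = 0`.
-/

open Matrix BigOperators Filter

/-- In-degree of node `i`: sum of absolute values of the `i`-th row of `A`. -/
noncomputable def inDeg {n : ℕ} (A : Matrix (Fin n) (Fin n) ℝ) (i : Fin n) : ℝ := ∑ j, |A i j|

/-- Laplacian `L = Δ − A` of the signed digraph with adjacency matrix `A`. -/
noncomputable def lapOf {n : ℕ} (A : Matrix (Fin n) (Fin n) ℝ) : Matrix (Fin n) (Fin n) ℝ :=
  Matrix.diagonal (inDeg A) - A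

/-- Laplacian `L̄ = Δ − Ā` of the induced unsigned digraph. -/
noncomputable def lapBar {n : ℕ} (A : Matrix (Fin n) (Fin n) ℝ) : Matrix (Fin n) (Fin n) ℝ :=
  Matrix.diagonal (inDeg A) - Matrix.of (fun i j => |A i j|)

/-- `det(L̄_ii)`: determinant of `L̄` with its `i`-th row and column removed. -/
noncomputable def minorDet {n : ℕ} (A : Matrix (Fin n) (Fin n) ℝ) (i : Fin n) : ℝ :=
  Matrix.det ((lapBar A).submatrix (fun k : {j : Fin n // j ≠ i} => (k : Fin n))
    (fun k : {j : Fin n // j ≠ i} => (k : Fin n)))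

/-- `W = diag(det(L̄_11), …, det(L̄_nn))`. -/
noncomputable def Wmat {n : ℕ} (A : Matrix (Fin n) (Fin n) ℝ) : Matrix (Fin n) (Fin n) ℝ :=
  Matrix.diagonal (minorDet A)

/-- Mirror adjacency matrix `Â = (W·A + Aᵀ·W)/2`. -/
noncomputable def mirrorAdj {n : ℕ} (A : Matrix (Fin n) (Fin n) ℝ) : Matrix (Fin n) (Fin n) ℝ :=
  (1/2 : ℝ) • (Wmat A * A + Aᵀ * Wmat A)

/-- Mirror Laplacian `L̂ = (W·L + Lᵀ·W)/2`. -/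
noncomputable def mirrorLap {n : ℕ} (A : Matrix (Fin n) (Fin n) ℝ) : Matrix (Fin n) (Fin n) ℝ :=
  (1/2 : ℝ) • (Wmat A * lapOf A + (lapOf A)ᵀ * Wmat A)

/-- `(j, i)` is a directed edge when `a_ij ≠ 0`; strong connectivity: a directed
path between every ordered pair of distinct nodes. -/
def StronglyConnected {n : ℕ} (A : Matrix (Fin n) (Fin n) ℝ) : Prop :=
  ∀ i j : Fin n, i ≠ j → Relation.TransGen (fun u v => A v u ≠ 0) i j

/-- `σ` is the diagonal of a gauge transformation: each entry is `±1`. -/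
def IsGauge {n : ℕ} (σ : Fin n → ℝ) : Prop := ∀ i, σ i = 1 ∨ σ i = -1

/-- Structural balance: there is a gauge transformation `D = diag σ` with all entries
of `D·A·D` (entrywise `σ i * A i j * σ j`) nonnegative. -/
def StructBalanced {n : ℕ} (A : Matrix (Fin n) (Fin n) ℝ) : Prop :=
  ∃ σ : Fin n → ℝ, IsGauge σ ∧ ∀ i j, 0 ≤ σ i * A i j * σ j

/-- Improved Laplacian potential function
`Φ_e(x) = Σ_i Σ_j det(L̄_ii)·|a_ij|·(x_i − sgn(a_ij)·x_j)²`. -/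
noncomputable def PhiE {n : ℕ} (A : Matrix (Fin n) (Fin n) ℝ) (x : Fin n → ℝ) : ℝ :=
  ∑ i, ∑ j, minorDet A i * |A i j| * (x i - Real.sign (A i j) * x j) ^ 2

theorem Matrix.det_nonneg_of_sum_row_le_diag {ι : Type*} [Fintype ι] [DecidableEq ι]
    {M : Matrix ι ι ℝ} (h : ∀ k, ∑ j ∈ Finset.univ.erase k, |M k j| ≤ M k k) : 0 ≤ M.det := by
  rcases isEmpty_or_nonempty ι with hι | hι
  · simp
  set p := (-M).charpoly
  have hp : ∀ t, p.eval t = (scalar ι t + M).det := fun t => by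
    rw [eval_charpoly, sub_neg_eq_add]
  have hne : ∀ t > 0, p.eval t ≠ 0 := by
    intro t ht
    rw [hp]
    refine det_ne_zero_of_sum_row_lt_diag fun k => ?_
    have hoff : ∀ j ∈ Finset.univ.erase k, ‖(scalar ι t + M) k j‖ = |M k j| := fun j hj => by
      simp [Matrix.diagonal_apply_ne' _ (Finset.ne_of_mem_erase hj), Real.norm_eq_abs]
    have hdiag : (scalar ι t + M) k k = t + M k k := by simp
    have hMkk : 0 ≤ M k k := (Finset.sum_nonneg fun j _ => abs_nonneg _).trans (h k)
    rw [Finset.sum_congr rfl hoff, hdiag, Real.norm_eq_abs, abs_of_pos (by linarith)]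
    linarith [h k]
  -- `p` is monic of positive degree and has no zero on `(0, ∞)`, so it is positive there.
  have htop : Tendsto p.eval atTop atTop :=
    p.tendsto_atTop_of_leadingCoeff_nonneg
      (by rw [charpoly_degree_eq_dim]; exact_mod_cast Fintype.card_pos)
      (by rw [(charpoly_monic _).leadingCoeff]; exact zero_le_one)
  have hpos : ∀ t ∈ Set.Ioi (0 : ℝ), 0 ≤ p.eval t := by
    intro t ht
    by_contra! hneg
    obtain ⟨z, hz, hz0⟩ := isPreconnected_Ioi.intermediate_value_Ici ht
      (le_principal_iff.mpr (Ioi_mem_atTop 0)) p.continuous.continuousOn htop hneg.le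
    exact hne z hz hz0
  have h0 : (0 : ℝ) ∈ closure (Set.Ioi 0) := by simp
  simpa [hp] using (isClosed_le continuous_const p.continuous).closure_subset_iff.mpr hpos h0

theorem Matrix.sum_row_le_diag_submatrix {ι κ : Type*} [Fintype ι] [DecidableEq ι] [Fintype κ]
    [DecidableEq κ] {M : Matrix ι ι ℝ} (h : ∀ k, ∑ j ∈ Finset.univ.erase k, |M k j| ≤ M k k)
    (e : κ ↪ ι) (k : κ) :
    ∑ j ∈ Finset.univ.erase k, |M.submatrix e e k j| ≤ M.submatrix e e k k := by
  have hsub : (Finset.univ.erase k).map e ⊆ Finset.univ.erase (e k) := by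
    intro m hm
    obtain ⟨j, hj, rfl⟩ := Finset.mem_map.mp hm
    exact Finset.mem_erase.mpr ⟨e.injective.ne (Finset.ne_of_mem_erase hj), Finset.mem_univ _⟩
  calc ∑ j ∈ Finset.univ.erase k, |M.submatrix e e k j|
      = ∑ m ∈ (Finset.univ.erase k).map e, |M (e k) m| := by rw [Finset.sum_map]; rfl
    _ ≤ ∑ m ∈ Finset.univ.erase (e k), |M (e k) m| :=
        Finset.sum_le_sum_of_subset_of_nonneg hsub fun _ _ _ => abs_nonneg _
    _ ≤ M.submatrix e e k k := h (e k)

theorem Matrix.adjugate_apply_self_eq_det_submatrix {ι R : Type*} [Fintype ι] [DecidableEq ι]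
    [CommRing R] (M : Matrix ι ι R) (i : ι) :
    M.adjugate i i =
      (M.submatrix (fun k : {j // j ≠ i} => (k : ι)) (fun k : {j // j ≠ i} => (k : ι))).det := by
  rw [adjugate_apply]
  -- Row `i` of the updated matrix is `eᵢ`, so it is block triangular with a `1 × 1` block `1`.
  have hblock : ∀ u, ¬ u ≠ i → ∀ v, v ≠ i → M.updateRow i (Pi.single i 1) u v = 0 := by
    intro u hu v hv
    rw [not_not.mp hu, updateRow_self, Pi.single_eq_of_ne hv]
  have : Subsingleton {u // ¬ u ≠ i} :=
    ⟨fun a b => Subtype.ext ((not_not.mp a.2).trans (not_not.mp b.2).symm)⟩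
  rw [twoBlockTriangular_det _ _ hblock, det_eq_elem_of_subsingleton
    (toSquareBlockProp _ fun u => ¬ u ≠ i) ⟨i, not_not_intro rfl⟩]
  simp only [toSquareBlockProp, toBlock_apply, updateRow_self, Pi.single_eq_same, mul_one]
  congr 1
  ext u v
  simp [toBlock_apply, updateRow_ne u.2]

section Laplacian

variable {n : ℕ} {A : Matrix (Fin n) (Fin n) ℝ}

theorem lapBar_mulVec_apply (x : Fin n → ℝ) (i : Fin n) :
    (lapBar A *ᵥ x) i = ∑ j, |A i j| * (x i - x j) := by
  simp only [mulVec, dotProduct, lapBar, Matrix.sub_apply, diagonal_apply, of_apply, sub_mul,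
    Finset.sum_sub_distrib, ite_mul, zero_mul, Finset.sum_ite_eq, Finset.mem_univ, if_true,
    inDeg, Finset.sum_mul, mul_sub]

theorem lapBar_mulVec_const (c : ℝ) : lapBar A *ᵥ (fun _ => c) = 0 := by
  funext i
  simp [lapBar_mulVec_apply]

theorem det_lapBar_eq_zero [NeZero n] : (lapBar A).det = 0 :=
  exists_mulVec_eq_zero_iff.mp ⟨fun _ => 1, Function.ne_iff.mpr ⟨0, one_ne_zero⟩,
    lapBar_mulVec_const 1⟩

theorem StronglyConnected.eq_of_lapBar_mulVec_eq_zero (hsc : StronglyConnected A)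
    {x : Fin n → ℝ} (hx : lapBar A *ᵥ x = 0) (i j : Fin n) : x i = x j := by
  obtain ⟨m, -, hm⟩ := Finset.exists_max_image Finset.univ x ⟨i, Finset.mem_univ i⟩
  -- Maximum principle: every in-neighbour of a node where `x` is maximal is maximal too.
  have hspread : ∀ v, x v = x m → ∀ u, A v u ≠ 0 → x u = x m := by
    intro v hv u hu
    have hterm : ∀ j ∈ Finset.univ, 0 ≤ |A v j| * (x v - x j) := fun j _ =>
      mul_nonneg (abs_nonneg _) (by linarith [hm j (Finset.mem_univ j)])
    have hzero : ∑ j, |A v j| * (x v - x j) = 0 := by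
      rw [← lapBar_mulVec_apply, hx, Pi.zero_apply]
    have := (Finset.sum_eq_zero_iff_of_nonneg hterm).mp hzero u (Finset.mem_univ u)
    rcases mul_eq_zero.mp this with h | h
    · exact absurd (abs_eq_zero.mp h) hu
    · linarith
  have hmax : ∀ k, x k = x m := by
    intro k
    rcases eq_or_ne k m with rfl | hkm
    · rfl
    have hpath := hsc k m hkm
    clear hkm
    induction hpath using Relation.TransGen.head_induction_on with
    | single h => exact hspread m rfl _ h
    | head h _ ih => exact hspread _ ih _ h
  rw [hmax i, hmax j]

theorem StronglyConnected.adjugate_lapBar_apply (hsc : StronglyConnected A) (k j : Fin n) :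
    (lapBar A).adjugate k j = minorDet A j := by
  have : NeZero n := ⟨j.pos.ne'⟩
  have hker : lapBar A *ᵥ (fun k => (lapBar A).adjugate k j) = 0 := by
    funext i
    simpa [mul_apply, mulVec, dotProduct, det_lapBar_eq_zero] using
      congrFun (congrFun (mul_adjugate (lapBar A)) i) j
  rw [hsc.eq_of_lapBar_mulVec_eq_zero hker k j, adjugate_apply_self_eq_det_submatrix]
  rfl

theorem StronglyConnected.sum_minorDet_mul_abs (hsc : StronglyConnected A) (j : Fin n) :
    ∑ k, minorDet A k * |A k j| = minorDet A j * inDeg A j := by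
  have : NeZero n := ⟨j.pos.ne'⟩
  have h := congrFun (congrFun (adjugate_mul (lapBar A)) j) j
  rw [det_lapBar_eq_zero, zero_smul, Matrix.zero_apply, mul_apply] at h
  simp only [hsc.adjugate_lapBar_apply] at h
  simp only [lapBar, Matrix.sub_apply, diagonal_apply, of_apply,
    mul_sub, Finset.sum_sub_distrib, mul_ite, mul_zero, Finset.sum_ite_eq', Finset.mem_univ,
    if_true] at h
  linarith

theorem minorDet_nonneg (A : Matrix (Fin n) (Fin n) ℝ) (i : Fin n) : 0 ≤ minorDet A i := by
  refine det_nonneg_of_sum_row_le_diag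
    (sum_row_le_diag_submatrix (fun k => ?_) (Function.Embedding.subtype _))
  have hoff : ∀ j ∈ Finset.univ.erase k, |lapBar A k j| = |A k j| := fun j hj => by
    simp [lapBar, diagonal_apply_ne _ (Finset.ne_of_mem_erase hj).symm]
  rw [Finset.sum_congr rfl hoff, Finset.sum_erase_eq_sub (Finset.mem_univ k)]
  simp [lapBar, inDeg]

end Laplacian

section Mirror

variable {n : ℕ} {A : Matrix (Fin n) (Fin n) ℝ}

theorem mirrorLap_apply (i j : Fin n) :
    mirrorLap A i j = (minorDet A i * lapOf A i j + lapOf A j i * minorDet A j) / 2 := by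
  simp only [mirrorLap, Wmat, Matrix.smul_apply, Matrix.add_apply, diagonal_mul, mul_diagonal,
    transpose_apply, smul_eq_mul]
  ring

theorem mirrorAdj_apply (i j : Fin n) :
    mirrorAdj A i j = (minorDet A i * A i j + A j i * minorDet A j) / 2 := by
  simp only [mirrorAdj, Wmat, Matrix.smul_apply, Matrix.add_apply, diagonal_mul, mul_diagonal,
    transpose_apply, smul_eq_mul]
  ring

theorem mirrorAdj_apply_self (hdiag : ∀ i, A i i = 0) (i : Fin n) : mirrorAdj A i i = 0 := by
  simp [mirrorAdj_apply, hdiag]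

theorem mirrorLap_apply_self (hdiag : ∀ i, A i i = 0) (i : Fin n) :
    mirrorLap A i i = minorDet A i * inDeg A i := by
  simp only [mirrorLap_apply, lapOf, Matrix.sub_apply, diagonal_apply_eq, hdiag, sub_zero]
  ring

theorem mirrorLap_apply_of_ne {i j : Fin n} (hij : i ≠ j) :
    mirrorLap A i j = -mirrorAdj A i j := by
  simp only [mirrorLap_apply, mirrorAdj_apply, lapOf, Matrix.sub_apply,
    diagonal_apply_ne _ hij, diagonal_apply_ne _ hij.symm]
  ring

theorem abs_mirrorAdj_apply (hdigon : ∀ i j, 0 ≤ A i j * A j i) (i j : Fin n) :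
    |mirrorAdj A i j| = (minorDet A i * |A i j| + minorDet A j * |A j i|) / 2 := by
  have hwi := minorDet_nonneg A i
  have hwj := minorDet_nonneg A j
  -- Digon sign-symmetry and `W ≥ 0` make the two summands of `âᵢⱼ` of equal sign.
  have hsame : 0 ≤ minorDet A i * A i j * (A j i * minorDet A j) := by
    rw [show minorDet A i * A i j * (A j i * minorDet A j)
      = minorDet A i * minorDet A j * (A i j * A j i) by ring]
    exact mul_nonneg (mul_nonneg hwi hwj) (hdigon i j)
  rw [mirrorAdj_apply, abs_div, abs_two, (abs_add_eq_add_abs_iff _ _).mpr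
    (mul_nonneg_iff.mp hsame), abs_mul, abs_mul, abs_of_nonneg hwi,
    abs_of_nonneg hwj, mul_comm |A j i|]

theorem StronglyConnected.sum_abs_mirrorAdj (hsc : StronglyConnected A)
    (hdigon : ∀ i j, 0 ≤ A i j * A j i) (i : Fin n) :
    ∑ j, |mirrorAdj A i j| = minorDet A i * inDeg A i := by
  simp only [abs_mirrorAdj_apply hdigon, ← Finset.sum_div, Finset.sum_add_distrib,
    ← Finset.mul_sum, hsc.sum_minorDet_mul_abs]
  rw [inDeg]
  ring

end Mirror

theorem mirrorLap_is_laplacian_of_mirrorAdj_general (n : ℕ)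
    (A : Matrix (Fin n) (Fin n) ℝ)
    (hdiag : ∀ i, A i i = 0) (hdigon : ∀ i j, 0 ≤ A i j * A j i)
    (hsc : StronglyConnected A) :
    mirrorLap A = Matrix.diagonal (fun i => ∑ j, |mirrorAdj A i j|) - mirrorAdj A ∧
    (∀ i, mirrorLap A i i = ∑ j, |mirrorAdj A i j|) ∧
    (∀ i j, i ≠ j → mirrorLap A i j = -(mirrorAdj A i j)) := by
  have hdiagonal : ∀ i, mirrorLap A i i = ∑ j, |mirrorAdj A i j| := fun i => by
    rw [mirrorLap_apply_self hdiag, hsc.sum_abs_mirrorAdj hdigon]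
  refine ⟨?_, hdiagonal, fun i j => mirrorLap_apply_of_ne⟩
  ext i j
  rcases eq_or_ne i j with rfl | hij
  · simp [hdiagonal, mirrorAdj_apply_self hdiag]
  · simp [mirrorLap_apply_of_ne hij, hij]

/-- `(W·L + Lᵀ·W)/2` is a valid Laplacian matrix of the mirror signed graph. -/
theorem mirrorLap_is_laplacian_of_mirrorAdj (n : ℕ) (hn : 2 ≤ n)
    (A : Matrix (Fin n) (Fin n) ℝ)
    (hdiag : ∀ i, A i i = 0) (hdigon : ∀ i j, 0 ≤ A i j * A j i)
    (hsc : StronglyConnected A) :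
    mirrorLap A = Matrix.diagonal (fun i => ∑ j, |mirrorAdj A i j|) - mirrorAdj A ∧
    (∀ i, mirrorLap A i i = ∑ j, |mirrorAdj A i j|) ∧
    (∀ i j, i ≠ j → mirrorLap A i j = -(mirrorAdj A i j)) :=
  mirrorLap_is_laplacian_of_mirrorAdj_general n A hdiag hdigon hsc
end

section
/- Let G be a strongly connected signed digraph with mirror adjacency matrix Â = (W·A + Aᵀ·W)/2. Then the mirror signed graph has the same sign pattern as G in the following sense: there exists a gauge transformation D such that every entry of D·Â·D is nonnegative if and only if there exists a gauge transformation D such that every entry of D·A·D is nonnegative (i.e., the mirror signed graph is structurally balanced if and only if G is structurally balanced, and structurally unbalanced if and only if G is structurally unbalanced). -/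
open Matrix BigOperators Filter

/-!
The weights `w i = det (L̄_ii)` are positive. Indeed `L̄_ii = diag Δ - |A|` (restricted to the
nodes `≠ i`) is weakly chained diagonally dominant: strong connectivity joins every row to a row
with an edge into `i`, which is strictly dominant. A maximum principle shows that
`diag Δ - t • |A|` is nonsingular for `t ∈ [0, 1]`, and its determinant is positive at `t = 0`.

Gauging gives `σ i * Â i j * σ j = (w i * (σ i * a_ij * σ j) + w j * (σ j * a_ji * σ i)) / 2`.
By digon sign-symmetry the two gauged entries have the same sign, so with positive weights the
sum is nonnegative exactly when both are.
-/

namespace Matrix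

variable {ι : Type*} [Fintype ι] [DecidableEq ι] {d : ι → ℝ} {B : Matrix ι ι ℝ}

lemma abs_max_of_mulVec_eq_zero (hB : ∀ k j, 0 ≤ B k j) (hrow : ∀ k, ∑ j, B k j ≤ d k)
    {x : ι → ℝ} (hx : (diagonal d - B) *ᵥ x = 0) {k : ι} (hk : ∀ j, |x j| ≤ |x k|) :
    d k * |x k| ≤ (∑ j, B k j) * |x k| ∧ ∀ j, B k j ≠ 0 → |x j| = |x k| := by
  have heq : d k * x k = ∑ j, B k j * x j := by
    have := congrFun hx k
    rw [sub_mulVec, Pi.sub_apply, mulVec_diagonal] at this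
    exact sub_eq_zero.mp this
  have hdk : 0 ≤ d k := (Finset.sum_nonneg fun j _ => hB k j).trans (hrow k)
  have hle : d k * |x k| ≤ ∑ j, B k j * |x j| := calc
    d k * |x k| = |∑ j, B k j * x j| := by rw [← heq, abs_mul, abs_of_nonneg hdk]
    _ ≤ ∑ j, |B k j * x j| := Finset.abs_sum_le_sum_abs _ _
    _ = ∑ j, B k j * |x j| := by simp_rw [abs_mul, abs_of_nonneg (hB k _)]
  have hgap : ∑ j, B k j * (|x k| - |x j|) = (∑ j, B k j) * |x k| - ∑ j, B k j * |x j| := by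
    simp only [mul_sub, Finset.sum_sub_distrib, ← Finset.sum_mul]
  have hterm : ∀ j, 0 ≤ B k j * (|x k| - |x j|) :=
    fun j => mul_nonneg (hB k j) (sub_nonneg.mpr (hk j))
  have hsum := Finset.sum_nonneg fun j (_ : j ∈ Finset.univ) => hterm j
  refine ⟨by linarith, fun j hj => ?_⟩
  have := mul_le_mul_of_nonneg_right (hrow k) (abs_nonneg (x k))
  have hzero := (Finset.sum_eq_zero_iff_of_nonneg fun j _ => hterm j).mp (by linarith) j
    (Finset.mem_univ j)
  linarith [(mul_eq_zero.mp hzero).resolve_left hj]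

def IsWeaklyChained (d : ι → ℝ) (B : Matrix ι ι ℝ) : Prop :=
  ∀ k, ∃ r, Relation.ReflTransGen (fun u v => B u v ≠ 0) k r ∧ ∑ j, B r j < d r

lemma eq_zero_of_diagonal_sub_mulVec_eq_zero (hB : ∀ k j, 0 ≤ B k j)
    (hrow : ∀ k, ∑ j, B k j ≤ d k) (hchain : IsWeaklyChained d B) {x : ι → ℝ}
    (hx : (diagonal d - B) *ᵥ x = 0) : x = 0 := by
  funext i
  have : Nonempty ι := ⟨i⟩
  obtain ⟨k, hk⟩ := Finite.exists_max fun j => |x j|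
  have hprop : ∀ r, Relation.ReflTransGen (fun u v => B u v ≠ 0) k r → ∀ j, |x j| ≤ |x r| := by
    intro r hpath
    induction hpath with
    | refl => exact hk
    | tail _ hedge ih =>
      exact fun j => (ih j).trans ((abs_max_of_mulVec_eq_zero hB hrow hx ih).2 _ hedge).ge
  obtain ⟨r, hpath, hstrict⟩ := hchain k
  have hmax := hprop r hpath
  have hr : |x r| = 0 := by
    by_contra hne
    have := (abs_max_of_mulVec_eq_zero hB hrow hx hmax).1
    have := mul_lt_mul_of_pos_right hstrict (lt_of_le_of_ne (abs_nonneg _) (Ne.symm hne))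
    linarith
  exact abs_eq_zero.mp (le_antisymm (hr ▸ hmax i) (abs_nonneg _))

omit [DecidableEq ι] in
lemma IsWeaklyChained.diag_pos (hB : ∀ k j, 0 ≤ B k j) (hrow : ∀ k, ∑ j, B k j ≤ d k)
    (hchain : IsWeaklyChained d B) (k : ι) : 0 < d k := by
  obtain ⟨r, hpath, hstrict⟩ := hchain k
  rcases hpath.cases_head with rfl | ⟨j, hkj, -⟩
  · exact (Finset.sum_nonneg fun j _ => hB k j).trans_lt hstrict
  · exact (lt_of_le_of_ne (hB k j) (Ne.symm hkj)).trans_le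
      ((Finset.single_le_sum (fun j _ => hB k j) (Finset.mem_univ j)).trans (hrow k))

theorem det_diagonal_sub_pos (hB : ∀ k j, 0 ≤ B k j) (hrow : ∀ k, ∑ j, B k j ≤ d k)
    (hchain : IsWeaklyChained d B) : 0 < (diagonal d - B).det := by
  have hd := hchain.diag_pos hB hrow
  set f : ℝ → ℝ := fun t => (diagonal d - t • B).det with hf
  -- for `t < 1` every row of `t • B` is strictly dominated, so `f` has no zero on `[0, 1]`
  have hne : ∀ t ∈ Set.Icc (0 : ℝ) 1, f t ≠ 0 := by
    rintro t ⟨ht0, ht1⟩ hzero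
    obtain ⟨v, hv, hBv⟩ := exists_mulVec_eq_zero_iff.mpr hzero
    have htB : ∀ k j, 0 ≤ (t • B) k j := fun k j => mul_nonneg ht0 (hB k j)
    have htrow : ∀ k, ∑ j, (t • B) k j ≤ t * d k := fun k => by
      simp only [smul_apply, smul_eq_mul, ← Finset.mul_sum]
      exact mul_le_mul_of_nonneg_left (hrow k) ht0
    refine hv (eq_zero_of_diagonal_sub_mulVec_eq_zero htB
      (fun k => (htrow k).trans (mul_le_of_le_one_left (hd k).le ht1)) ?_ hBv)
    rcases ht1.lt_or_eq with ht1 | rfl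
    · exact fun k => ⟨k, .refl, (htrow k).trans_lt (mul_lt_of_lt_one_left (hd k) ht1)⟩
    · simpa using hchain
  have hcont : Continuous f := by
    refine Continuous.matrix_det (continuous_matrix fun k j => ?_)
    simp only [sub_apply, smul_apply, smul_eq_mul]
    fun_prop
  have hf0 : 0 < f 0 := by
    simpa [hf, det_diagonal] using Finset.prod_pos fun k _ => hd k
  by_contra hf1
  obtain ⟨c, hc, hfc⟩ := intermediate_value_Icc' zero_le_one hcont.continuousOn
    ⟨by simpa [hf] using not_lt.mp hf1, hf0.le⟩
  exact hne c hc hfc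

end Matrix

lemma lapBar_submatrix_ne {n : ℕ} (A : Matrix (Fin n) (Fin n) ℝ) (i : Fin n) :
    (lapBar A).submatrix (fun k : {j // j ≠ i} => (k : Fin n))
        (fun k : {j // j ≠ i} => (k : Fin n)) =
      diagonal (fun k : {j // j ≠ i} => inDeg A k) - of fun k j : {j // j ≠ i} => |A k j| := by
  ext k j
  simp [lapBar, diagonal_apply, Subtype.ext_iff]

lemma minorDet_pos {n : ℕ} {A : Matrix (Fin n) (Fin n) ℝ} (hsc : StronglyConnected A)
    (i : Fin n) : 0 < minorDet A i := by
  have hsplit : ∀ k, ∑ j : {j // j ≠ i}, |A k j| + |A k i| = inDeg A k := fun k => by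
    rw [inDeg, Fintype.sum_eq_add_sum_subtype_ne _ i, add_comm]
  rw [minorDet, lapBar_submatrix_ne]
  refine det_diagonal_sub_pos (fun _ _ => abs_nonneg _)
    (fun k => by simp only [of_apply]; linarith [hsplit k, abs_nonneg (A k i)]) fun k => ?_
  -- reverse a path from `i` to `k`; the node reached just before `i` has an edge to `i`
  suffices h : ∀ q, Relation.TransGen (fun u v => A v u ≠ 0) i q → ∀ hq : q ≠ i,
      ∃ r : {j // j ≠ i}, Relation.ReflTransGen (fun u v : {j // j ≠ i} => A u v ≠ 0) ⟨q, hq⟩ r ∧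
        ∑ j : {j // j ≠ i}, |A r j| < inDeg A r by
    simpa using h k (hsc i k (Ne.symm k.2)) k.2
  have hstrict : ∀ k, A k i ≠ 0 → ∑ j : {j // j ≠ i}, |A k j| < inDeg A k := fun k hk => by
    linarith [hsplit k, abs_pos.mpr hk]
  intro q hpath
  induction hpath with
  | single hedge => exact fun hq => ⟨⟨_, hq⟩, .refl, hstrict _ hedge⟩
  | @tail p q _ hedge ih =>
    intro hq
    by_cases hp : p = i
    · subst hp; exact ⟨⟨q, hq⟩, .refl, hstrict _ hedge⟩
    · obtain ⟨r, hpr, hr⟩ := ih hp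
      exact ⟨r, .head hedge hpr, hr⟩

lemma gauge_mul_self {n : ℕ} {σ : Fin n → ℝ} (h : IsGauge σ) (i : Fin n) : σ i * σ i = 1 := by
  rcases h i with h | h <;> rw [h] <;> norm_num

lemma gauge_mirrorAdj_apply {n : ℕ} (A : Matrix (Fin n) (Fin n) ℝ) (σ : Fin n → ℝ) (i j : Fin n) :
    σ i * mirrorAdj A i j * σ j =
      (minorDet A i * (σ i * A i j * σ j) + minorDet A j * (σ j * A j i * σ i)) / 2 := by
  simp only [mirrorAdj, Wmat, Matrix.smul_apply, Matrix.add_apply, diagonal_mul, mul_diagonal,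
    transpose_apply, smul_eq_mul]
  ring

lemma nonneg_of_weighted_add_nonneg {a b u v : ℝ} (ha : 0 < a) (hb : 0 < b) (huv : 0 ≤ u * v)
    (h : 0 ≤ a * u + b * v) : 0 ≤ u := by
  by_contra hu
  have hv : v ≤ 0 := by nlinarith
  nlinarith

theorem mirror_structurally_balanced_iff_general (n : ℕ)
    (A : Matrix (Fin n) (Fin n) ℝ)
    (hdigon : ∀ i j, 0 ≤ A i j * A j i)
    (hsc : StronglyConnected A) :
    StructBalanced (mirrorAdj A) ↔ StructBalanced A := by
  have hw := minorDet_pos hsc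
  refine ⟨fun ⟨σ, hσ, hbal⟩ => ⟨σ, hσ, fun i j => ?_⟩,
    fun ⟨σ, hσ, hbal⟩ => ⟨σ, hσ, fun i j => ?_⟩⟩
  · have hprod : (σ i * A i j * σ j) * (σ j * A j i * σ i) = A i j * A j i := by
      linear_combination (A i j * A j i * σ j * σ j) * gauge_mul_self hσ i +
        (A i j * A j i) * gauge_mul_self hσ j
    refine nonneg_of_weighted_add_nonneg (hw i) (hw j) (hprod ▸ hdigon i j) ?_
    linarith [gauge_mirrorAdj_apply A σ i j, hbal i j]
  · rw [gauge_mirrorAdj_apply]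
    exact div_nonneg
      (add_nonneg (mul_nonneg (hw i).le (hbal i j)) (mul_nonneg (hw j).le (hbal j i))) zero_le_two

/-- the mirror signed graph has the same sign pattern as `G`:
it is structurally balanced iff `G` is. -/
theorem mirror_structurally_balanced_iff (n : ℕ) (hn : 2 ≤ n)
    (A : Matrix (Fin n) (Fin n) ℝ)
    (hdiag : ∀ i, A i i = 0) (hdigon : ∀ i j, 0 ≤ A i j * A j i)
    (hsc : StronglyConnected A) :
    StructBalanced (mirrorAdj A) ↔ StructBalanced A :=
  mirror_structurally_balanced_iff_general n A hdigon hsc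
end

section
/- Let G be any signed digraph. Then for every x ∈ ℝⁿ, the improved Laplacian potential function satisfies Φ_e(x) = xᵀ(W·L + Lᵀ·W)x; that is, Σ_{i=1}^n Σ_{j=1}^n det(L̄_ii)·|a_ij|·(x_i − sgn(a_ij)·x_j)² = xᵀ(W·L + Lᵀ·W)x. -/
open Matrix BigOperators Filter

/-!
Expanding the squares gives, for an arbitrary weight vector `w`,
`∑ᵢ ∑ⱼ wᵢ |aᵢⱼ| (xᵢ - sgn(aᵢⱼ) xⱼ)² = xᵀ(diag(w) L + Lᵀ diag(w)) x - ∑ⱼ (wᵀ L̄)ⱼ xⱼ²`.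
For `wᵢ = det(L̄ᵢᵢ)` the defect vanishes: `L̄` has zero row sums, so all cofactors in a column
of its adjugate agree, `w` is the diagonal of `adj L̄`, and `wᵀ L̄` is the diagonal of
`adj(L̄) L̄ = det(L̄) I = 0`.
-/

namespace Matrix

variable {ι R : Type*} [Fintype ι] [DecidableEq ι] [CommRing R]

theorem det_eq_zero_of_sum_row_eq_zero [Nonempty ι] {M : Matrix ι ι R}
    (hM : ∀ i, ∑ j, M i j = 0) : M.det = 0 := by
  obtain ⟨j⟩ := ‹Nonempty ι›
  have hcol := det_updateCol_sum M j 1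
  simp only [Pi.one_apply, one_smul, hM] at hcol
  rw [← hcol]
  exact det_eq_zero_of_column_eq_zero j fun k ↦ by simp

theorem adjugate_apply_eq_of_sum_row_eq_zero {M : Matrix ι ι R}
    (hM : ∀ i, ∑ j, M i j = 0) (i j k : ι) : M.adjugate j i = M.adjugate k i := by
  have : Nonempty ι := ⟨i⟩
  have hdiff : (M.updateRow i (Pi.single j 1 - Pi.single k 1)).det = 0 := by
    refine det_eq_zero_of_sum_row_eq_zero fun l ↦ ?_
    rcases eq_or_ne l i with rfl | hl
    · simp [Finset.sum_sub_distrib]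
    · simp [updateRow_ne hl, hM l]
  have hsplit := det_updateRow_add M i (Pi.single j 1 - Pi.single k 1) (Pi.single k 1)
  rwa [sub_add_cancel, hdiff, zero_add, ← adjugate_apply, ← adjugate_apply] at hsplit

theorem diag_adjugate_vecMul_eq_zero {M : Matrix ι ι R}
    (hM : ∀ i, ∑ j, M i j = 0) : M.adjugate.diag ᵥ* M = 0 := by
  ext j
  have : Nonempty ι := ⟨j⟩
  calc (M.adjugate.diag ᵥ* M) j = ∑ i, M.adjugate j i * M i j := by
        simp only [vecMul, dotProduct, diag_apply,
          adjugate_apply_eq_of_sum_row_eq_zero hM _ _ j]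
    _ = 0 := by rw [← mul_apply, adjugate_mul, det_eq_zero_of_sum_row_eq_zero hM, zero_smul,
        zero_apply]

theorem det_submatrix_ne_eq_adjugate_apply_self (M : Matrix ι ι R) (i : ι) :
    (M.submatrix (fun k : {j // j ≠ i} ↦ (k : ι)) (fun k : {j // j ≠ i} ↦ (k : ι))).det =
      M.adjugate i i := by
  rw [adjugate_apply, twoBlockTriangular_det' _ (· = i), eq_comm]
  · convert one_mul _ using 2
    -- `convert`, not `rw`: the block carries `Subtype.fintype`, the lemma `Fintype.subtypeEq`.
    · convert det_eq_elem_of_subsingleton _ (⟨i, rfl⟩ : {j // j = i})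
      simp [toSquareBlockProp_def]
    · ext k l
      simp [toSquareBlockProp_def, updateRow_ne k.2]
  · rintro l rfl j hj
    simp [Ne.symm hj]

theorem dotProduct_diagonal_mul_add_transpose_mulVec (L : Matrix ι ι R)
    (w x : ι → R) :
    x ⬝ᵥ ((diagonal w * L + Lᵀ * diagonal w) *ᵥ x) = 2 * ∑ i, w i * x i * (L *ᵥ x) i := by
  rw [add_mulVec, dotProduct_add, ← mulVec_mulVec, ← mulVec_mulVec, dotProduct_mulVec x Lᵀ,
    vecMul_transpose]
  simp only [dotProduct, mulVec_diagonal, two_mul, ← Finset.sum_add_distrib]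
  exact Finset.sum_congr rfl fun i _ ↦ by ring

end Matrix

section Laplacian

theorem abs_mul_sub_sign_mul_sq (a u v : ℝ) :
    |a| * (u - Real.sign a * v) ^ 2 = |a| * u ^ 2 + |a| * v ^ 2 - 2 * a * u * v := by
  rcases lt_trichotomy a 0 with ha | rfl | ha
  · rw [Real.sign_of_neg ha, abs_of_neg ha]; ring
  · simp
  · rw [Real.sign_of_pos ha, abs_of_pos ha]; ring

variable {n : ℕ}

theorem lapOf_mulVec_apply (A : Matrix (Fin n) (Fin n) ℝ) (x : Fin n → ℝ) (i : Fin n) :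
    (lapOf A *ᵥ x) i = ∑ j, (|A i j| * x i - A i j * x j) := by
  rw [lapOf, sub_mulVec, Pi.sub_apply, mulVec_diagonal, inDeg, Finset.sum_mul,
    Finset.sum_sub_distrib]
  simp only [mulVec, dotProduct]

theorem vecMul_lapBar_apply (A : Matrix (Fin n) (Fin n) ℝ) (w : Fin n → ℝ) (j : Fin n) :
    (w ᵥ* lapBar A) j = ∑ i, (w j * |A j i| - w i * |A i j|) := by
  rw [lapBar, vecMul_sub, Pi.sub_apply, vecMul_diagonal, inDeg, Finset.mul_sum,
    Finset.sum_sub_distrib]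
  simp only [vecMul, dotProduct, of_apply]

theorem sum_weighted_signed_sq_eq (A : Matrix (Fin n) (Fin n) ℝ) (w x : Fin n → ℝ) :
    ∑ i, ∑ j, w i * |A i j| * (x i - Real.sign (A i j) * x j) ^ 2 =
      x ⬝ᵥ ((diagonal w * lapOf A + (lapOf A)ᵀ * diagonal w) *ᵥ x) -
        ∑ j, (w ᵥ* lapBar A) j * x j ^ 2 := by
  set S₁ := ∑ i, ∑ j, w i * |A i j| * x i ^ 2
  set S₂ := ∑ i, ∑ j, w i * |A i j| * x j ^ 2
  set T := ∑ i, ∑ j, w i * A i j * x i * x j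
  have hphi :
      ∑ i, ∑ j, w i * |A i j| * (x i - Real.sign (A i j) * x j) ^ 2 = S₁ + S₂ - 2 * T := by
    simp only [S₁, S₂, T, Finset.mul_sum, ← Finset.sum_add_distrib, ← Finset.sum_sub_distrib]
    refine Finset.sum_congr rfl fun i _ ↦ Finset.sum_congr rfl fun j _ ↦ ?_
    rw [mul_assoc, abs_mul_sub_sign_mul_sq]
    ring
  have hquad : x ⬝ᵥ ((diagonal w * lapOf A + (lapOf A)ᵀ * diagonal w) *ᵥ x) = 2 * (S₁ - T) := by
    simp only [dotProduct_diagonal_mul_add_transpose_mulVec, lapOf_mulVec_apply, S₁, T,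
      Finset.mul_sum, ← Finset.sum_sub_distrib]
    exact Finset.sum_congr rfl fun i _ ↦ Finset.sum_congr rfl fun j _ ↦ by ring
  have hdefect : ∑ j, (w ᵥ* lapBar A) j * x j ^ 2 = S₁ - S₂ := by
    simp only [vecMul_lapBar_apply, S₁, S₂, Finset.sum_mul, Finset.sum_sub_distrib, sub_mul]
    rw [Finset.sum_comm (γ := Fin n) (f := fun j i ↦ w i * |A i j| * x j ^ 2)]
  linarith

theorem lapBar_sum_row_eq_zero (A : Matrix (Fin n) (Fin n) ℝ) (i : Fin n) :
    ∑ j, lapBar A i j = 0 := by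
  simp [lapBar, Finset.sum_sub_distrib, diagonal_apply, inDeg]

theorem minorDet_eq_diag_adjugate (A : Matrix (Fin n) (Fin n) ℝ) :
    minorDet A = (lapBar A).adjugate.diag :=
  funext fun i ↦ det_submatrix_ne_eq_adjugate_apply_self (lapBar A) i

theorem minorDet_vecMul_lapBar (A : Matrix (Fin n) (Fin n) ℝ) : minorDet A ᵥ* lapBar A = 0 := by
  rw [minorDet_eq_diag_adjugate]
  exact diag_adjugate_vecMul_eq_zero (lapBar_sum_row_eq_zero A)

end Laplacian

theorem phiE_eq_quadratic_form_general (n : ℕ)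
    (A : Matrix (Fin n) (Fin n) ℝ) :
    ∀ x : Fin n → ℝ,
      PhiE A x = x ⬝ᵥ ((Wmat A * lapOf A + (lapOf A)ᵀ * Wmat A) *ᵥ x) := by
  intro x
  rw [PhiE, Wmat, sum_weighted_signed_sq_eq, minorDet_vecMul_lapBar]
  simp

/-- `Φ_e(x) = xᵀ(W·L + Lᵀ·W)x` for every `x ∈ ℝⁿ`. -/
theorem phiE_eq_quadratic_form (n : ℕ) (hn : 2 ≤ n)
    (A : Matrix (Fin n) (Fin n) ℝ)
    (hdiag : ∀ i, A i i = 0) (hdigon : ∀ i j, 0 ≤ A i j * A j i) :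
    ∀ x : Fin n → ℝ,
      PhiE A x = x ⬝ᵥ ((Wmat A * lapOf A + (lapOf A)ᵀ * Wmat A) *ᵥ x) :=
  phiE_eq_quadratic_form_general n A
end
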